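/- arXiv:2512.20262 — 2 statements merged into one kernel-verified Lean document; each statement's English description precedes it below -/
import Mathlib

section
/- Let f = a_0 + a_1 z + ... + a_n z^n ∈ ℤ[z] be a primitive polynomial of degree n with a_0·a_n ≠ 0. Suppose there exists a positive integer m with m ≥ h_f + 2 such that |s_n(m)| = |a_n| = p_1^{k_1}···p_r^{k_r}, where p_1,…,p_r are primes which are pairwise distinct if r ≥ 2 and k_1,…,k_r are positive integers. Suppose that for each i = 1,…,r there exists a positive integer j_i ≤ n such that: (i) v_{p_i}(s_{n−j_i}(m)) = 0 and gcd(k_i, j_i) = 1; (ii) if j_i > 1, then k_i/j_i < v_{p_i}(s_{n−t}(m))/(j_i − t) for each t = 1,…,j_i − 1; and (iii) |s_0(m)|/q ≤ |s_n(m)|, where q is the smallest prime divisor of |s_0(m)| = |f(m)|. Then f is a product of at most r irreducible polynomials in ℤ[z]; in particular, if r = 1, then f is irreducible in ℤ[z]. -/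
/-- The height `h_f = max_{0 ≤ i ≤ n-1} |a_i|/|a_n|` of a polynomial
`f = a_0 + a_1 z + ⋯ + a_n z^n` of degree `n`. -/
noncomputable def height (f : Polynomial ℤ) : ℝ :=
  ⨆ i : Fin f.natDegree, (|f.coeff i| : ℝ) / |f.coeff f.natDegree|

/-!
Write `f = ±g₁⋯g_s` with irreducible `g_i`, of positive degree since `f` is primitive. The
coefficients of `f(z + m)` are the `s_t(m)`, so (i) and (ii) say that the last edge of the
`p_i`-adic Newton polygon of `f(z + m)` joins `(n - j_i, 0)` to `(n, k_i)`, with no lattice point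
in between as `gcd(k_i, j_i) = 1`. Take the Gauss norm `max_d |a_d|_p c^d` with
`c^{j_i} = p_i^{k_i}`: both ends of the edge attain it, so by multiplicativity each factor of
`f(z + m)` attains its Gauss norm both at its leading coefficient and at a `p_i`-unit coefficient.
These two points span a segment of slope `k_i / j_i` with lattice endpoints, and the lengths of the
two segments add up to `j_i`, so one of them is zero: `p_i` divides the leading coefficient of at
most one factor. Hence if `s > r`, some factor `g₀` has leading coefficient `±1`. By Cauchy's bound
every complex root of `f` has modulus `< h_f + 1 ≤ m - 1`, so `|g(m)| > |lc g|` for each factor,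
and `|g(m)| ≥ q` because `g(m) ∣ f(m)`. Then `|f(m)| ≥ q ∏_{g ≠ g₀} |g(m)| > q |a_n|`,
contradicting (iii).
-/

open Polynomial

noncomputable def padicIntAbv (p : ℕ) [Fact p.Prime] : AbsoluteValue ℤ ℝ :=
  (Rat.AbsoluteValue.padic p).comp (f := Int.castRingHom ℚ) Int.cast_injective

section PadicIntAbv

variable {p : ℕ} [hp : Fact p.Prime]

theorem padicIntAbv_apply (x : ℤ) : padicIntAbv p x = padicNorm p x := rfl

theorem isNonarchimedean_padicIntAbv : IsNonarchimedean (padicIntAbv p) := fun x y => by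
  have h := padicNorm.nonarchimedean (p := p) (q := x) (r := y)
  rw [padicIntAbv_apply, padicIntAbv_apply, padicIntAbv_apply, Int.cast_add]
  exact_mod_cast h

theorem padicIntAbv_eq_zpow {x : ℤ} (hx : x ≠ 0) :
    padicIntAbv p x = (p : ℝ) ^ (-padicValInt p x : ℤ) := by
  rw [padicIntAbv_apply, padicNorm.eq_zpow_of_nonzero (Int.cast_ne_zero.mpr hx),
    padicValRat.of_int]
  push_cast
  rfl

theorem padicIntAbv_eq_one_of_not_dvd {x : ℤ} (hx : ¬ (p : ℤ) ∣ x) : padicIntAbv p x = 1 := by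
  rw [padicIntAbv_eq_zpow (by rintro rfl; simp at hx), padicValInt.eq_zero_of_not_dvd hx]
  simp

theorem one_le_padicValInt_of_dvd {x : ℤ} (hx : x ≠ 0) (hpx : (p : ℤ) ∣ x) :
    1 ≤ padicValInt p x := by
  have := (padicValInt_dvd_iff 1 x).mp (by simpa using hpx)
  tauto

variable {j k : ℕ} {c : ℝ} (hcj : c ^ j = (p : ℝ) ^ k)
include hcj

theorem padicIntAbv_mul_pow_pow {x : ℤ} (hx : x ≠ 0) (d : ℕ) :
    (padicIntAbv p x * c ^ d) ^ j = (p : ℝ) ^ ((k * d : ℤ) - j * padicValInt p x) := by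
  have hp0 : (p : ℝ) ≠ 0 := by exact_mod_cast hp.out.ne_zero
  rw [mul_pow, ← pow_mul, mul_comm d, pow_mul, hcj, padicIntAbv_eq_zpow hx]
  simp only [← zpow_natCast, ← zpow_mul]
  rw [← zpow_add₀ hp0]
  ring_nf

variable (hc : 0 < c) (hj : j ≠ 0)
include hc hj

theorem padicIntAbv_mul_pow_le_pow_iff {x : ℤ} (hx : x ≠ 0) (d e : ℕ) :
    padicIntAbv p x * c ^ d ≤ c ^ e ↔ (k * d : ℤ) - j * padicValInt p x ≤ k * e := by
  have hp1 : (1 : ℝ) < p := by exact_mod_cast hp.out.one_lt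
  have he := padicIntAbv_mul_pow_pow (p := p) hcj one_ne_zero e
  rw [map_one, one_mul, padicValInt.one, Nat.cast_zero, mul_zero, sub_zero] at he
  rw [← pow_le_pow_iff_left₀ (by positivity) (by positivity) hj, he,
    padicIntAbv_mul_pow_pow hcj hx, zpow_le_zpow_iff_right₀ hp1]

theorem padicIntAbv_mul_pow_eq_pow_iff {x : ℤ} (hx : x ≠ 0) (d e : ℕ) :
    padicIntAbv p x * c ^ d = c ^ e ↔ (k * d : ℤ) - j * padicValInt p x = k * e := by
  have hp1 : (1 : ℝ) < p := by exact_mod_cast hp.out.one_lt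
  have he := padicIntAbv_mul_pow_pow (p := p) hcj one_ne_zero e
  rw [map_one, one_mul, padicValInt.one, Nat.cast_zero, mul_zero, sub_zero] at he
  rw [← pow_left_inj₀ (by positivity) (by positivity) hj, he,
    padicIntAbv_mul_pow_pow hcj hx, zpow_right_inj₀ (by positivity) hp1.ne']

end PadicIntAbv

theorem Polynomial.gaussNorm_eq_of_gaussNorm_mul_le {R : Type*} [Ring R] {v : AbsoluteValue R ℝ}
    (hna : IsNonarchimedean v) {c : ℝ} (hc : 0 < c) {P Q : R[X]} {d e : ℕ}
    (hP : P.coeff d ≠ 0) (hQ : Q.coeff e ≠ 0)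
    (h : (P * Q).gaussNorm v c ≤ v (P.coeff d) * c ^ d * (v (Q.coeff e) * c ^ e)) :
    P.gaussNorm v c = v (P.coeff d) * c ^ d ∧ Q.gaussNorm v c = v (Q.coeff e) * c ^ e := by
  rw [gaussNorm_mul hna hc] at h
  have hPd := P.le_gaussNorm v hc.le d
  have hQe := Q.le_gaussNorm v hc.le e
  have hPd0 : 0 < v (P.coeff d) * c ^ d := mul_pos (v.pos hP) (pow_pos hc d)
  have hQe0 : 0 < v (Q.coeff e) * c ^ e := mul_pos (v.pos hQ) (pow_pos hc e)
  constructor <;> nlinarith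

theorem Polynomial.exists_not_dvd_coeff_of_not_dvd_coeff_mul {R : Type*} [CommSemiring R]
    {a : R} {P Q : R[X]} {s : ℕ} (h : ¬ a ∣ (P * Q).coeff s) :
    ∃ e e', e + e' = s ∧ ¬ a ∣ P.coeff e ∧ ¬ a ∣ Q.coeff e' := by
  contrapose! h
  rw [coeff_mul]
  refine Finset.dvd_sum fun x hx => ?_
  by_cases hPx : a ∣ P.coeff x.1
  · exact hPx.mul_right _
  · exact (h x.1 x.2 (Finset.HasAntidiagonal.mem_antidiagonal.mp hx) hPx).mul_left _

theorem le_of_mul_eq_mul_of_coprime {k j : ℕ} (hkj : k.Coprime j) (hj : 0 < j) {x : ℤ} {α : ℕ}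
    (h : k * x = j * α) (hα : 0 < α) : (j : ℤ) ≤ x := by
  have hx : 0 < x := by nlinarith
  have hjx : (j : ℤ) ∣ x :=
    (Nat.isCoprime_iff_coprime.mpr hkj.symm).dvd_of_dvd_mul_left ⟨α, h⟩
  exact Int.le_of_dvd hx hjx

/-- The last edge of the `p`-adic Newton polygon of `F` joins `(natDegree F - j, 0)` to
`(natDegree F, k)`. -/
structure HasLastNewtonEdge (p : ℕ) (F : ℤ[X]) (j k : ℕ) : Prop where
  le_natDegree : j ≤ F.natDegree
  padicValInt_leadingCoeff : padicValInt p F.leadingCoeff = k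
  not_dvd_coeff : ¬ (p : ℤ) ∣ F.coeff (F.natDegree - j)
  above : ∀ d, F.coeff d ≠ 0 → k * (d + j) ≤ j * padicValInt p (F.coeff d) + k * F.natDegree

namespace HasLastNewtonEdge

variable {p : ℕ} [hp : Fact p.Prime] {j k : ℕ}

theorem gaussNorm_le {F : ℤ[X]} (hF : HasLastNewtonEdge p F j k) {c : ℝ} (hc : 0 < c)
    (hj : j ≠ 0) (hcj : c ^ j = (p : ℝ) ^ k) :
    F.gaussNorm (padicIntAbv p) c ≤ c ^ (F.natDegree - j) := by
  obtain ⟨i, hi⟩ := exists_eq_gaussNorm (padicIntAbv p) c F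
  rw [hi]
  by_cases h0 : F.coeff i = 0
  · rw [h0, map_zero, zero_mul]
    exact (pow_pos hc _).le
  have := hF.above i h0
  rw [padicIntAbv_mul_pow_le_pow_iff hcj hc hj h0]
  push_cast [hF.le_natDegree]
  linarith

theorem not_dvd_leadingCoeff {P Q : ℤ[X]} (hF : HasLastNewtonEdge p (P * Q) j k) (hj : 0 < j)
    (hkj : k.Coprime j) (hP : (p : ℤ) ∣ P.leadingCoeff) : ¬ (p : ℤ) ∣ Q.leadingCoeff := by
  intro hQ
  obtain ⟨e, e', hee', hPe, hQe'⟩ := exists_not_dvd_coeff_of_not_dvd_coeff_mul hF.not_dvd_coeff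
  have hP0 : P.leadingCoeff ≠ 0 := by rw [Ne, leadingCoeff_eq_zero]; rintro rfl; simp at hPe
  have hQ0 : Q.leadingCoeff ≠ 0 := by rw [Ne, leadingCoeff_eq_zero]; rintro rfl; simp at hQe'
  have hN : (P * Q).natDegree = P.natDegree + Q.natDegree :=
    natDegree_mul (leadingCoeff_ne_zero.mp hP0) (leadingCoeff_ne_zero.mp hQ0)
  have hjN := hF.le_natDegree
  obtain ⟨c, hc, hcj⟩ : ∃ c : ℝ, 0 < c ∧ c ^ j = (p : ℝ) ^ k :=
    ⟨_, Real.rpow_pos_of_pos (pow_pos (mod_cast hp.out.pos) k) _,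
      Real.rpow_inv_natCast_pow (by positivity) hj.ne'⟩
  have hnorm := hF.gaussNorm_le hc hj.ne' hcj
  have htop : padicIntAbv p P.leadingCoeff * c ^ P.natDegree *
      (padicIntAbv p Q.leadingCoeff * c ^ Q.natDegree) = c ^ ((P * Q).natDegree - j) := by
    rw [mul_mul_mul_comm, ← map_mul, ← pow_add, ← hN,
      padicIntAbv_mul_pow_eq_pow_iff hcj hc hj.ne' (mul_ne_zero hP0 hQ0), ← leadingCoeff_mul,
      hF.padicValInt_leadingCoeff]
    push_cast [hjN]
    ring
  have hbottom : padicIntAbv p (P.coeff e) * c ^ e * (padicIntAbv p (Q.coeff e') * c ^ e') =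
      c ^ ((P * Q).natDegree - j) := by
    rw [padicIntAbv_eq_one_of_not_dvd hPe, padicIntAbv_eq_one_of_not_dvd hQe', one_mul, one_mul,
      ← pow_add, hee']
  obtain ⟨hPa, hQb⟩ := gaussNorm_eq_of_gaussNorm_mul_le isNonarchimedean_padicIntAbv hc
    hP0 hQ0 (hnorm.trans htop.ge)
  obtain ⟨hPe₁, hQe₁⟩ := gaussNorm_eq_of_gaussNorm_mul_le isNonarchimedean_padicIntAbv hc
    (by rintro h; simp [h] at hPe) (by rintro h; simp [h] at hQe') (hnorm.trans hbottom.ge)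
  rw [padicIntAbv_eq_one_of_not_dvd hPe, one_mul] at hPe₁
  rw [padicIntAbv_eq_one_of_not_dvd hQe', one_mul] at hQe₁
  have hα := (padicIntAbv_mul_pow_eq_pow_iff hcj hc hj.ne' hP0 _ _).mp (hPa.symm.trans hPe₁)
  have hβ := (padicIntAbv_mul_pow_eq_pow_iff hcj hc hj.ne' hQ0 _ _).mp (hQb.symm.trans hQe₁)
  have hx := le_of_mul_eq_mul_of_coprime hkj hj (x := P.natDegree - e)
    (by linear_combination hα) (one_le_padicValInt_of_dvd hP0 hP)
  have hy := le_of_mul_eq_mul_of_coprime hkj hj (x := Q.natDegree - e')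
    (by linear_combination hβ) (one_le_padicValInt_of_dvd hQ0 hQ)
  omega

theorem countP_dvd_leadingCoeff_le_one {u : ℤ} {s : Multiset ℤ[X]}
    (hF : HasLastNewtonEdge p (C u * s.prod) j k) (hj : 0 < j) (hkj : k.Coprime j) :
    s.countP (fun g => (p : ℤ) ∣ g.leadingCoeff) ≤ 1 := by
  by_contra! h
  obtain ⟨g, hg, hpg⟩ := Multiset.countP_pos.mp (zero_lt_one.trans h)
  rw [← Multiset.cons_erase hg, Multiset.countP_cons, if_pos hpg] at h
  rw [← Multiset.cons_erase hg, Multiset.prod_cons, mul_left_comm] at hF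
  obtain ⟨g', hg', hpg'⟩ := Multiset.countP_pos.mp
    (by omega : 0 < (s.erase g).countP fun g => (p : ℤ) ∣ g.leadingCoeff)
  apply hF.not_dvd_leadingCoeff hj hkj hpg
  rw [leadingCoeff_mul, leadingCoeff_C, leadingCoeff_multiset_prod]
  exact (hpg'.trans (Multiset.dvd_prod (Multiset.mem_map_of_mem _ hg'))).mul_left u

end HasLastNewtonEdge

theorem hasLastNewtonEdge_taylor {p j k : ℕ} {f : ℤ[X]} (m : ℤ) (hj : j ≤ f.natDegree)
    (hk : padicValInt p f.leadingCoeff = k)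
    (hunit : ¬ (p : ℤ) ∣ (hasseDeriv (f.natDegree - j) f).eval m)
    (habove : ∀ t, 1 ≤ t → t ≤ j - 1 → (hasseDeriv (f.natDegree - t) f).eval m = 0 ∨
      (k : ℚ) / j < padicValInt p ((hasseDeriv (f.natDegree - t) f).eval m) / ((j : ℚ) - t)) :
    HasLastNewtonEdge p (taylor m f) j k where
  le_natDegree := by rwa [natDegree_taylor]
  padicValInt_leadingCoeff := by rwa [leadingCoeff_taylor]
  not_dvd_coeff := by rwa [natDegree_taylor, taylor_coeff]
  above d hd := by
    rw [natDegree_taylor]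
    obtain ⟨t, ht⟩ : ∃ t, f.natDegree = d + t :=
      Nat.exists_eq_add_of_le (natDegree_taylor f m ▸ le_natDegree_of_ne_zero hd)
    rw [ht]
    rcases Nat.eq_zero_or_pos t with rfl | ht0
    · have : (taylor m f).coeff d = f.leadingCoeff := by
        rw [← natDegree_taylor f m, add_zero] at ht
        rw [← ht, ← leadingCoeff, leadingCoeff_taylor]
      rw [this, hk]
      nlinarith
    rcases lt_or_ge t j with htj | htj
    · have hd' : d = f.natDegree - t := by omega
      rw [taylor_coeff, hd'] at hd ⊢
      have := (habove t ht0 (by omega)).resolve_left hd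
      rw [div_lt_div_iff₀ (by exact_mod_cast (by omega : 0 < j))
        (sub_pos.mpr (by exact_mod_cast htj))] at this
      qify
      nlinarith
    · nlinarith

theorem cauchyBound_map_le_height_add_one {f : ℤ[X]} (hf : f ≠ 0) :
    (cauchyBound (f.map (Int.castRingHom ℂ)) : ℝ) ≤ height f + 1 := by
  have hinj : Function.Injective (Int.castRingHom ℂ) := Int.cast_injective
  have hbdd : BddAbove (Set.range fun i : Fin f.natDegree =>
      (|f.coeff i| : ℝ) / |f.coeff f.natDegree|) := (Set.finite_range _).bddAbove
  have hlc : (0 : ℝ) < |f.coeff f.natDegree| := by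
    simpa [abs_pos] using leadingCoeff_ne_zero.mpr hf
  let H : NNReal := ⟨height f, Real.iSup_nonneg fun i => by positivity⟩
  suffices h : cauchyBound (f.map (Int.castRingHom ℂ)) ≤ H + 1 by exact_mod_cast h
  rw [cauchyBound, natDegree_map_eq_of_injective hinj, add_le_add_iff_right,
    leadingCoeff_map_of_injective hinj, div_le_iff₀ (by simpa using hf)]
  refine Finset.sup_le fun i hi => ?_
  have := le_ciSup hbdd ⟨i, Finset.mem_range.mp hi⟩
  rw [div_le_iff₀ hlc] at this
  rw [← NNReal.coe_le_coe, NNReal.coe_mul, coe_nnnorm, coe_nnnorm, coeff_map, eq_intCast,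
    eq_intCast, Complex.norm_intCast, Complex.norm_intCast]
  rw [← Int.cast_abs (a := f.leadingCoeff)]
  exact this

theorem norm_leadingCoeff_lt_norm_eval {g : ℂ[X]} (hg : 0 < g.natDegree) {z : ℂ}
    (h : ∀ α ∈ g.roots, 1 < ‖z - α‖) : ‖g.leadingCoeff‖ < ‖g.eval z‖ := by
  have hg0 : g ≠ 0 := ne_zero_of_natDegree_gt hg
  obtain ⟨α, hα⟩ : ∃ α, α ∈ g.roots :=
    Multiset.card_pos_iff_exists_mem.mp ((IsAlgClosed.splits g).natDegree_eq_card_roots ▸ hg)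
  rw [(IsAlgClosed.splits g).eval_eq_prod_roots, ← Multiset.cons_erase hα, Multiset.map_cons,
    Multiset.prod_cons, norm_mul, norm_mul]
  have hrest : 1 ≤ ‖((g.roots.erase α).map (z - ·)).prod‖ := by
    rw [show ‖((g.roots.erase α).map (z - ·)).prod‖ = _ from
      map_multiset_prod (normHom : ℂ →*₀ ℝ) _, Multiset.map_map]
    exact Multiset.one_le_prod fun x hx => by
      obtain ⟨β, hβ, rfl⟩ := Multiset.mem_map.mp hx
      exact (h β (Multiset.mem_of_mem_erase hβ)).le
  exact lt_mul_of_one_lt_right (norm_pos_iff.mpr (leadingCoeff_ne_zero.mpr hg0))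
    (one_lt_mul_of_lt_of_le (h α hα) hrest)

theorem natAbs_leadingCoeff_lt_natAbs_eval {f g : ℤ[X]} (hf : f ≠ 0) (hgf : g ∣ f)
    (hg : 0 < g.natDegree) {m : ℕ} (hm : height f + 2 ≤ m) :
    g.leadingCoeff.natAbs < (g.eval (m : ℤ)).natAbs := by
  have hinj : Function.Injective (Int.castRingHom ℂ) := Int.cast_injective
  have hroots : ∀ α ∈ (g.map (Int.castRingHom ℂ)).roots, 1 < ‖(m : ℂ) - α‖ := by
    intro α hα
    have hfα : (f.map (Int.castRingHom ℂ)).IsRoot α :=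
      (mem_roots'.mp hα).2.dvd (Polynomial.map_dvd _ hgf)
    have hα : ‖α‖ < height f + 1 := (NNReal.coe_lt_coe.mpr
      (hfα.norm_lt_cauchyBound ((Polynomial.map_ne_zero_iff hinj).mpr hf))).trans_le
        (cauchyBound_map_le_height_add_one hf)
    have := norm_sub_norm_le (m : ℂ) α
    rw [Complex.norm_natCast] at this
    linarith
  have := norm_leadingCoeff_lt_norm_eval
    (by rwa [natDegree_map_eq_of_injective hinj]) hroots
  rw [leadingCoeff_map_of_injective hinj, eval_map,
    show (m : ℂ) = Int.castRingHom ℂ (m : ℤ) by simp, eval₂_at_apply, eq_intCast, eq_intCast, Complex.norm_intCast, Complex.norm_intCast] at this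
  zify
  exact_mod_cast this

theorem Multiset.card_le_sum_countP {α ι : Type*} (s : Multiset α) (t : Finset ι)
    (P : ι → α → Prop) [∀ i, DecidablePred (P i)] (h : ∀ a ∈ s, ∃ i ∈ t, P i a) :
    Multiset.card s ≤ ∑ i ∈ t, s.countP (P i) := by
  induction s using Multiset.induction_on with
  | empty => simp
  | cons a s ih =>
    obtain ⟨i, hi, hPi⟩ := h a (Multiset.mem_cons_self a s)
    have ih := ih fun b hb => h b (Multiset.mem_cons_of_mem hb)
    have ha : 1 ≤ ∑ x ∈ t, if P x a then 1 else 0 := by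
      rw [Finset.sum_boole, Nat.cast_id]
      exact Finset.card_pos.mpr ⟨i, Finset.mem_filter.mpr ⟨hi, hPi⟩⟩
    simp only [Multiset.countP_cons, Finset.sum_add_distrib, Multiset.card_cons]
    omega

theorem padicValInt_eq_of_natAbs_eq_prod_pow {x : ℤ} {r : ℕ} {p k : ℕ → ℕ}
    (hp : ∀ i < r, (p i).Prime) (hpdist : ∀ i < r, ∀ i' < r, i ≠ i' → p i ≠ p i')
    (hx : x.natAbs = ∏ i ∈ Finset.range r, p i ^ k i) {i : ℕ} (hi : i < r) :
    padicValInt (p i) x = k i := by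
  have := Fact.mk (hp i hi)
  rw [padicValInt, hx, ← Nat.factorization_def _ (hp i hi),
    Nat.factorization_prod fun l hl => pow_ne_zero _ (hp l (Finset.mem_range.mp hl)).ne_zero,
    Finset.sum_apply', Finset.sum_eq_single i]
  · rw [(hp i hi).factorization_pow, Finsupp.single_eq_same]
  · intro l hl hli
    rw [(hp l (Finset.mem_range.mp hl)).factorization_pow, Finsupp.single_eq_of_ne]
    exact (hpdist l (Finset.mem_range.mp hl) i hi hli).symm
  · exact fun h => absurd (Finset.mem_range.mpr hi) h

theorem natAbs_eq_one_of_dvd_prod_pow {b x : ℤ} {r : ℕ} {p k : ℕ → ℕ}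
    (hp : ∀ i < r, (p i).Prime) (hx : x.natAbs = ∏ i ∈ Finset.range r, p i ^ k i) (hb : b ∣ x)
    (hnd : ∀ i < r, ¬ (p i : ℤ) ∣ b) : b.natAbs = 1 := by
  refine Nat.Coprime.eq_one_of_dvd ?_ (hx ▸ Int.natAbs_dvd_natAbs.mpr hb)
  refine Nat.Coprime.prod_right fun i hi => Nat.Coprime.pow_right _ (Nat.Coprime.symm ?_)
  exact (hp i (Finset.mem_range.mp hi)).coprime_iff_not_dvd.mpr
    (Int.natCast_dvd.not.mp (hnd i (Finset.mem_range.mp hi)))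

theorem Multiset.mul_prod_map_lt_prod_map {α : Type*} {s : Multiset α} {L E : α → ℕ} {q : ℕ}
    (hs : 2 ≤ Multiset.card s) {a : α} (ha : a ∈ s) (hLa : L a = 1) (hq : ∀ x ∈ s, q ≤ E x)
    (hLE : ∀ x ∈ s, L x < E x) : q * (s.map L).prod < (s.map E).prod := by
  classical
  obtain ⟨b, hb⟩ : ∃ b, b ∈ s.erase a := Multiset.card_pos_iff_exists_mem.mp (by
    rw [Multiset.card_erase_of_mem ha, Nat.pred_eq_sub_one]; omega)
  have hmem : ∀ x ∈ (s.erase a).erase b, x ∈ s := fun x hx =>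
    Multiset.mem_of_mem_erase (Multiset.mem_of_mem_erase hx)
  have hb' := Multiset.mem_of_mem_erase hb
  rw [← Multiset.cons_erase ha, ← Multiset.cons_erase hb]
  simp only [Multiset.map_cons, Multiset.prod_cons, hLa, one_mul]
  have hLE' : ((((s.erase a).erase b)).map L).prod ≤ (((s.erase a).erase b).map E).prod :=
    Multiset.prod_map_le_prod_map₀ _ _ (fun _ _ => Nat.zero_le _)
      fun x hx => (hLE x (hmem x hx)).le
  have hE : 0 < (((s.erase a).erase b).map E).prod :=
    Multiset.prod_pos fun y hy => by
      obtain ⟨x, hx, rfl⟩ := Multiset.mem_map.mp hy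
      exact (Nat.zero_le _).trans_lt (hLE x (hmem x hx))
  have := hq a ha
  have := hLE b hb'
  calc q * (L b * ((((s.erase a).erase b)).map L).prod)
      ≤ E a * (L b * (((s.erase a).erase b).map E).prod) := by gcongr
    _ < E a * (E b * (((s.erase a).erase b).map E).prod) := by
      have := (Nat.zero_le _).trans_lt (hLE a ha)
      gcongr

theorem Polynomial.IsPrimitive.exists_irreducible_factors {f : ℤ[X]} (hf : f.IsPrimitive)
    (hf0 : f ≠ 0) : ∃ (u : ℤˣ) (gs : Multiset ℤ[X]),
      (∀ g ∈ gs, 0 < g.natDegree ∧ Irreducible g) ∧ f = C (u : ℤ) * gs.prod := by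
  obtain ⟨gs, hirr, w, hw⟩ := WfDvdMonoid.exists_factors f hf0
  obtain ⟨c, hc, hcw⟩ := Polynomial.isUnit_iff.mp w.isUnit
  refine ⟨hc.unit, gs, fun g hg => ⟨?_, hirr g hg⟩, ?_⟩
  · by_contra! h0
    have hgf : C (g.coeff 0) ∣ f :=
      eq_C_of_natDegree_le_zero h0 ▸ hw ▸ (Multiset.dvd_prod hg).mul_right _
    exact (hirr g hg).not_isUnit (eq_C_of_natDegree_le_zero h0 ▸ (hf _ hgf).map C)
  · rw [← hw, ← hcw, IsUnit.unit_spec, mul_comm]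

theorem natAbs_map_C_mul_prod {gs : Multiset ℤ[X]} (u : ℤˣ) (φ : ℤ[X] →* ℤ)
    (hφ : (φ (C (u : ℤ))).natAbs = 1) :
    (φ (C (u : ℤ) * gs.prod)).natAbs = (gs.map fun g => (φ g).natAbs).prod := by
  rw [map_mul, Int.natAbs_mul, hφ, one_mul, map_multiset_prod]
  exact (map_multiset_prod Int.natAbsHom _).trans (by rw [Multiset.map_map]; rfl)

theorem irreducible_of_eq_mul_prod_of_card_le_one {M : Type*} [CommMonoid M] {f a : M}
    {s : Multiset M} (hfeq : f = a * s.prod) (ha : IsUnit a) (hs : ∀ g ∈ s, Irreducible g)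
    (hcard : Multiset.card s ≤ 1) (hf : ¬ IsUnit f) : Irreducible f := by
  rcases Nat.le_one_iff_eq_zero_or_eq_one.mp hcard with h0 | h1
  · rw [Multiset.card_eq_zero.mp h0, Multiset.prod_zero, mul_one] at hfeq
    exact absurd (hfeq ▸ ha) hf
  · obtain ⟨g, rfl⟩ := Multiset.card_eq_one.mp h1
    rw [hfeq, Multiset.prod_singleton, irreducible_isUnit_mul ha]
    exact hs g (Multiset.mem_singleton_self g)

theorem exists_natAbs_leadingCoeff_eq_one {f : ℤ[X]} {gs : Multiset ℤ[X]}
    (hdvd : ∀ g ∈ gs, g ∣ f) {r : ℕ} {p k : ℕ → ℕ} (hp : ∀ i < r, (p i).Prime)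
    (hlc : f.leadingCoeff.natAbs = ∏ i ∈ Finset.range r, p i ^ k i)
    (hcount : ∀ i < r, gs.countP (fun g => (p i : ℤ) ∣ g.leadingCoeff) ≤ 1)
    (hgr : r < Multiset.card gs) : ∃ g ∈ gs, g.leadingCoeff.natAbs = 1 := by
  by_contra! hL
  refine hgr.not_ge ((Multiset.card_le_sum_countP gs (Finset.range r)
    (fun i g => (p i : ℤ) ∣ g.leadingCoeff) fun g hg => ?_).trans ?_)
  · by_contra! hnd
    exact hL g hg (natAbs_eq_one_of_dvd_prod_pow hp hlc
      (leadingCoeff_dvd_leadingCoeff (hdvd g hg)) fun i hi => hnd i (Finset.mem_range.mpr hi))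
  · exact (Finset.sum_le_sum fun i hi => hcount i (Finset.mem_range.mp hi)).trans (by simp)

theorem le_of_dvd_of_forall_prime_dvd_le {a b q : ℕ} (ha : 2 ≤ a) (hab : a ∣ b)
    (hq : ∀ q', q'.Prime → q' ∣ b → q ≤ q') : q ≤ a :=
  (hq _ (Nat.minFac_prime (by omega)) ((Nat.minFac_dvd a).trans hab)).trans
    (Nat.minFac_le (by omega))

theorem card_le_of_countP_dvd_leadingCoeff_le_one {f : ℤ[X]} {u : ℤˣ} {gs : Multiset ℤ[X]}
    (hfeq : f = C (u : ℤ) * gs.prod) (hdeg : ∀ g ∈ gs, 0 < g.natDegree) {m : ℕ}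
    (hm : height f + 2 ≤ m) {r : ℕ} (hr : 0 < r) {p k : ℕ → ℕ} (hp : ∀ i < r, (p i).Prime)
    (hlc : f.leadingCoeff.natAbs = ∏ i ∈ Finset.range r, p i ^ k i)
    (hcount : ∀ i < r, gs.countP (fun g => (p i : ℤ) ∣ g.leadingCoeff) ≤ 1) {q : ℕ}
    (hqmin : ∀ q', q'.Prime → q' ∣ (f.eval (m : ℤ)).natAbs → q ≤ q')
    (hbound : (f.eval (m : ℤ)).natAbs ≤ q * f.leadingCoeff.natAbs) :
    Multiset.card gs ≤ r := by
  by_contra! hgr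
  have hdvd : ∀ g ∈ gs, g ∣ f := fun g hg => hfeq ▸ (Multiset.dvd_prod hg).mul_left _
  have hf0 : f ≠ 0 := hfeq ▸ mul_ne_zero (by simp)
    (Multiset.prod_ne_zero fun h0 => (hdeg 0 h0).ne' natDegree_zero)
  obtain ⟨g₀, hg₀, hL⟩ := exists_natAbs_leadingCoeff_eq_one hdvd hp hlc hcount hgr
  have hlt : ∀ g ∈ gs, g.leadingCoeff.natAbs < (g.eval (m : ℤ)).natAbs := fun g hg =>
    natAbs_leadingCoeff_lt_natAbs_eval hf0 (hdvd g hg) (hdeg g hg) hm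
  have hq : ∀ g ∈ gs, q ≤ (g.eval (m : ℤ)).natAbs := fun g hg => by
    have := Int.natAbs_pos.mpr (leadingCoeff_ne_zero.mpr (ne_zero_of_natDegree_gt (hdeg g hg)))
    exact le_of_dvd_of_forall_prime_dvd_le (by linarith [hlt g hg])
      (Int.natAbs_dvd_natAbs.mpr (eval_dvd (hdvd g hg))) hqmin
  have hlcprod : f.leadingCoeff.natAbs = (gs.map fun g => g.leadingCoeff.natAbs).prod :=
    hfeq ▸ natAbs_map_C_mul_prod u leadingCoeffHom (by
      rw [leadingCoeffHom_apply, leadingCoeff_C, Int.units_natAbs])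
  have hevalprod : (f.eval (m : ℤ)).natAbs = (gs.map fun g => (g.eval (m : ℤ)).natAbs).prod :=
    hfeq ▸ natAbs_map_C_mul_prod u (evalRingHom (m : ℤ)).toMonoidHom (by simp)
  have := Multiset.mul_prod_map_lt_prod_map (by omega) hg₀ hL hq hlt
  rw [hlcprod, hevalprod] at hbound
  omega

theorem statement1_general
    (f : Polynomial ℤ) (n : ℕ) (hdeg : f.natDegree = n)
    (hprim : f.IsPrimitive)
    (m : ℕ) (hmh : height f + 2 ≤ (m : ℝ))
    (r : ℕ) (hr : 0 < r)
    (p k j : ℕ → ℕ)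
    (hp : ∀ i < r, Nat.Prime (p i))
    (hpdist : ∀ i < r, ∀ i' < r, i ≠ i' → p i ≠ p i')
    (hsn : (f.coeff n).natAbs = ∏ i ∈ Finset.range r, p i ^ k i)
    (hj : ∀ i < r, 0 < j i ∧ j i ≤ n)
    (hcond1 : ∀ i < r,
      ¬ ((p i : ℤ) ∣ (Polynomial.hasseDeriv (n - j i) f).eval (m : ℤ)) ∧
      Nat.gcd (k i) (j i) = 1)
    (hcond2 : ∀ i < r, 1 < j i → ∀ t, 1 ≤ t → t ≤ j i - 1 →
      (Polynomial.hasseDeriv (n - t) f).eval (m : ℤ) = 0 ∨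
      (k i : ℚ) / (j i : ℚ) <
        (padicValInt (p i) ((Polynomial.hasseDeriv (n - t) f).eval (m : ℤ)) : ℚ) /
          ((j i : ℚ) - (t : ℚ)))
    (q : ℕ) (hq : Nat.Prime q)
    (hqmin : ∀ q', Nat.Prime q' → q' ∣ (f.eval (m : ℤ)).natAbs → q ≤ q')
    (hcond3 : ((f.eval (m : ℤ)).natAbs : ℚ) / (q : ℚ) ≤ ((f.coeff n).natAbs : ℚ)) :
    (∃ (N : ℕ) (u : ℤˣ) (gs : Multiset (Polynomial ℤ)),
      N ≤ r ∧ Multiset.card gs = N ∧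
      (∀ g ∈ gs, 0 < g.natDegree ∧ Irreducible g) ∧
      f = Polynomial.C (u : ℤ) * gs.prod) ∧
    (r = 1 → Irreducible f) := by
  subst hdeg
  have hn : 0 < f.natDegree := (hj 0 hr).1.trans_le (hj 0 hr).2
  obtain ⟨u, gs, hgs, hfeq⟩ := hprim.exists_irreducible_factors (ne_zero_of_natDegree_gt hn)
  have htaylor : taylor (m : ℤ) f = C (u : ℤ) * (gs.map (taylor (m : ℤ))).prod := by
    rw [hfeq, taylor_mul, taylor_C]
    exact congrArg _ (map_multiset_prod (taylorAlgHom (m : ℤ)) gs)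
  have hcount (i : ℕ) (hi : i < r) : gs.countP (fun g => (p i : ℤ) ∣ g.leadingCoeff) ≤ 1 := by
    have := Fact.mk (hp i hi)
    have hedge := hasLastNewtonEdge_taylor (m : ℤ) (hj i hi).2
      (padicValInt_eq_of_natAbs_eq_prod_pow hp hpdist hsn hi) (hcond1 i hi).1
      fun t ht1 htj => hcond2 i hi (by omega) t ht1 htj
    rw [htaylor] at hedge
    have h := hedge.countP_dvd_leadingCoeff_le_one (hj i hi).1 (hcond1 i hi).2
    rw [Multiset.countP_map] at h
    simpa only [leadingCoeff_taylor, Multiset.countP_eq_card_filter] using h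
  have hbound : (f.eval (m : ℤ)).natAbs ≤ q * f.leadingCoeff.natAbs := by
    rw [div_le_iff₀ (by exact_mod_cast hq.pos)] at hcond3
    rw [mul_comm]
    exact_mod_cast hcond3
  have hcard := card_le_of_countP_dvd_leadingCoeff_le_one hfeq (fun g hg => (hgs g hg).1) hmh hr
    hp hsn hcount hqmin hbound
  refine ⟨⟨_, u, gs, hcard, rfl, hgs, hfeq⟩, fun hr1 => ?_⟩
  exact irreducible_of_eq_mul_prod_of_card_le_one hfeq (u.isUnit.map C) (fun g hg => (hgs g hg).2)
    (hr1 ▸ hcard) fun hunit => hn.ne' (natDegree_eq_zero_of_isUnit hunit)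

/-- Theorem 2: if `f` is primitive of degree `n`, `a_0 a_n ≠ 0`, `m ≥ h_f + 2` is a
positive integer, `|s_n(m)| = |a_n| = p_1^{k_1} ⋯ p_r^{k_r}` for pairwise distinct
primes `p_i`, and for each `i` there is `1 ≤ j_i ≤ n` with
`v_{p_i}(s_{n-j_i}(m)) = 0`, `gcd(k_i, j_i) = 1`, (if `j_i > 1`)
`k_i/j_i < v_{p_i}(s_{n-t}(m))/(j_i - t)` for `t = 1, …, j_i - 1`
(`s_t = f^{(t)}/t!`, `v_p(0) = ∞`), and `|s_0(m)|/q ≤ |s_n(m)|` where `q` is the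
smallest prime divisor of `|s_0(m)| = |f(m)|`, then `f` is a product of at most `r`
irreducible polynomials in `ℤ[z]`; in particular if `r = 1` then `f` is
irreducible. -/
theorem statement1
    (f : Polynomial ℤ) (n : ℕ) (hdeg : f.natDegree = n)
    (ha : f.coeff 0 * f.coeff n ≠ 0) (hprim : f.IsPrimitive)
    (m : ℕ) (hm : 0 < m) (hmh : height f + 2 ≤ (m : ℝ))
    (r : ℕ) (hr : 0 < r)
    (p k j : ℕ → ℕ)
    (hp : ∀ i < r, Nat.Prime (p i))
    (hk : ∀ i < r, 0 < k i)
    (hpdist : ∀ i < r, ∀ i' < r, i ≠ i' → p i ≠ p i')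
    (hsn : (f.coeff n).natAbs = ∏ i ∈ Finset.range r, p i ^ k i)
    (hj : ∀ i < r, 0 < j i ∧ j i ≤ n)
    (hcond1 : ∀ i < r,
      ¬ ((p i : ℤ) ∣ (Polynomial.hasseDeriv (n - j i) f).eval (m : ℤ)) ∧
      Nat.gcd (k i) (j i) = 1)
    (hcond2 : ∀ i < r, 1 < j i → ∀ t, 1 ≤ t → t ≤ j i - 1 →
      (Polynomial.hasseDeriv (n - t) f).eval (m : ℤ) = 0 ∨
      (k i : ℚ) / (j i : ℚ) <
        (padicValInt (p i) ((Polynomial.hasseDeriv (n - t) f).eval (m : ℤ)) : ℚ) /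
          ((j i : ℚ) - (t : ℚ)))
    (q : ℕ) (hq : Nat.Prime q) (hqdvd : q ∣ (f.eval (m : ℤ)).natAbs)
    (hqmin : ∀ q', Nat.Prime q' → q' ∣ (f.eval (m : ℤ)).natAbs → q ≤ q')
    (hcond3 : ((f.eval (m : ℤ)).natAbs : ℚ) / (q : ℚ) ≤ ((f.coeff n).natAbs : ℚ)) :
    (∃ (N : ℕ) (u : ℤˣ) (gs : Multiset (Polynomial ℤ)),
      N ≤ r ∧ Multiset.card gs = N ∧
      (∀ g ∈ gs, 0 < g.natDegree ∧ Irreducible g) ∧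
      f = Polynomial.C (u : ℤ) * gs.prod) ∧
    (r = 1 → Irreducible f) :=
  statement1_general f n hdeg hprim m hmh r hr p k j hp hpdist hsn hj hcond1 hcond2 q hq hqmin
    hcond3
end

section
/- Let f = a_0 + a_1 z + ... + a_n z^n ∈ ℤ[z] be a primitive polynomial of degree n with a_0·a_n ≠ 0, and let Δ be a positive integer with Δ ≤ n such that f has no nonconstant factor of degree less than Δ in ℤ[z]. Suppose there exist positive integers m, d, k and a prime p with p ∤ d such that m ≥ h_f + 1, (m − 1 − h_f)^Δ ≥ d, |s_n(m)| = |a_n| = p^k · d, and |s_0(m)|/q ≤ |s_n(m)|, where q is the smallest prime divisor of |s_0(m)| = |f(m)|. Then f is a product of at most min_{1 ≤ i ≤ n} { k, i + v_p(s_{n−i}(m)) } irreducible polynomials in ℤ[z]. In particular, if k = 1, or if p ∤ s_{n−1}(m), then f is irreducible in ℤ[z]. -/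
/-- `v_p(a)` with values in `ℕ∞`, where `v_p(0) = ∞`. -/
noncomputable def intVal (p : ℕ) (a : ℤ) : ℕ∞ :=
  if a = 0 then ⊤ else (padicValInt p a : ℕ∞)

/-!
Write `f = ± g₁ ⋯ g_r` with every `g_j` irreducible of positive degree (`f` is primitive).
Every complex root of `f` has modulus less than Cauchy's bound `1 + h_f`, so
`|g_j(m)| > |lc g_j| (m - 1 - h_f)^{deg g_j} ≥ |lc g_j| d`; moreover `|g_j(m)| ≥ q`, since
`q` is the least prime factor of `|f(m)|`. If `r ≥ 2`, comparing `∏ |g_j(m)| = |f(m)| ≤ q p^k d`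
with `∏ |lc g_j| = p^k d` gives `|lc g_j| > d^{r-1} ≥ d` for every `j`, so `p ∣ lc g_j` because
`p ∤ d`, and therefore `r ≤ k`. Finally `f(z + m) = ± ∏ g_j(z + m)` is a product of `r`
polynomials whose leading coefficients are divisible by `p`, so its coefficient of `z^{n-i}`,
which is `s_{n-i}(m)`, is divisible by `p^{r-i}`.
-/

open Polynomial

namespace Multiset

variable {ι : Type*} {s : Multiset ι} {B V : ι → ℕ}

theorem pow_pred_card_lt_of_prod_map_le {q d : ℕ} (hq : 0 < q) (hd : 0 < d)
    (hB : ∀ i ∈ s, 0 < B i) (hBV : ∀ i ∈ s, B i * d < V i) (hqV : ∀ i ∈ s, q ≤ V i)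
    (hV : (s.map V).prod ≤ q * (s.map B).prod) (hs : 2 ≤ card s) {i : ι} (hi : i ∈ s) :
    d ^ (card s - 1) < B i := by
  obtain ⟨t, rfl⟩ : ∃ t, s = i ::ₘ t := exists_cons_of_mem hi
  have ht : t ≠ 0 := by rintro rfl; simp at hs
  have hBt : 0 < (t.map B).prod := prod_pos fun _ hb => by
    obtain ⟨j, hj, rfl⟩ := mem_map.mp hb; exact hB j (mem_cons_of_mem hj)
  have hVt : (t.map V).prod ≤ B i * (t.map B).prod := by
    refine Nat.le_of_mul_le_mul_left ?_ hq
    calc q * (t.map V).prod ≤ V i * (t.map V).prod := by gcongr; exact hqV i (mem_cons_self i t)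
      _ ≤ q * (B i * (t.map B).prod) := by simpa using hV
  have hBVt : (t.map B).prod * d ^ card t < (t.map V).prod := by
    calc (t.map B).prod * d ^ card t = (t.map fun j => B j * d).prod := by
          rw [prod_map_mul, map_const', prod_replicate]
      _ < (t.map V).prod := prod_map_lt_prod_map ht _ _
          (fun j hj => Nat.mul_pos (hB j (mem_cons_of_mem hj)) hd)
          (fun j hj => hBV j (mem_cons_of_mem hj))
  rw [card_cons, Nat.add_sub_cancel]
  exact Nat.lt_of_mul_lt_mul_left (a := (t.map B).prod) (by linarith)

theorem card_le_of_prime_dvd_of_prod_map_eq {p k d : ℕ} (hp : p.Prime) (hpd : ¬ p ∣ d)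
    (hpB : ∀ i ∈ s, p ∣ B i) (hB : (s.map B).prod = p ^ k * d) : card s ≤ k := by
  have h : p ^ card s ∣ p ^ k * d := by
    simpa [hB] using prod_dvd_prod_of_dvd (fun _ => p) B hpB
  exact (Nat.pow_dvd_pow_iff_le_right hp.one_lt).mp <|
    (Nat.Coprime.pow_left _ ((hp.coprime_iff_not_dvd).mpr hpd)).dvd_of_dvd_mul_right h

end Multiset

theorem Nat.Prime.dvd_of_dvd_pow_mul_of_lt {p k d b : ℕ} (hp : p.Prime) (hb : b ∣ p ^ k * d)
    (hd : 0 < d) (hdb : d < b) : p ∣ b := by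
  by_contra hpb
  have hbd : b ∣ d :=
    (Nat.Coprime.pow_right k (hp.coprime_iff_not_dvd.mpr hpb).symm).dvd_of_dvd_mul_left hb
  exact absurd (Nat.le_of_dvd hd hbd) (not_le.mpr hdb)

namespace Polynomial

variable {R : Type*}

section CommSemiring

variable [CommSemiring R] {a : R}

theorem pow_dvd_coeff_mul {F G : R[X]} {r s D E : ℕ} (hF : F.natDegree ≤ D)
    (hG : G.natDegree ≤ E) (hFa : ∀ j, a ^ (r - (D - j)) ∣ F.coeff j)
    (hGa : ∀ j, a ^ (s - (E - j)) ∣ G.coeff j) (j : ℕ) :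
    a ^ (r + s - (D + E - j)) ∣ (F * G).coeff j := by
  rw [coeff_mul]
  refine Finset.dvd_sum fun ⟨x, y⟩ hxy => ?_
  rw [Finset.HasAntidiagonal.mem_antidiagonal] at hxy
  rcases lt_or_ge D x with hx | hx
  · simp [coeff_eq_zero_of_natDegree_lt (hF.trans_lt hx)]
  rcases lt_or_ge E y with hy | hy
  · simp [coeff_eq_zero_of_natDegree_lt (hG.trans_lt hy)]
  calc a ^ (r + s - (D + E - j)) ∣ a ^ (r - (D - x)) * a ^ (s - (E - y)) := by
        rw [← pow_add]; exact pow_dvd_pow a (by omega)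
    _ ∣ F.coeff x * G.coeff y := mul_dvd_mul (hFa x) (hGa y)

theorem pow_dvd_coeff_multiset_prod (s : Multiset R[X]) (hs : ∀ g ∈ s, a ∣ g.leadingCoeff)
    (j : ℕ) : a ^ (Multiset.card s - ((s.map natDegree).sum - j)) ∣ s.prod.coeff j := by
  induction s using Multiset.induction generalizing j with
  | empty => simp
  | cons g t ih =>
    have hg (j : ℕ) : a ^ (1 - (g.natDegree - j)) ∣ g.coeff j := by
      rcases lt_trichotomy j g.natDegree with hj | rfl | hj
      · simp [Nat.sub_eq_zero_of_le (by omega : 1 ≤ g.natDegree - j)]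
      · simpa using hs g (Multiset.mem_cons_self g t)
      · simp [coeff_eq_zero_of_natDegree_lt hj]
    rw [Multiset.prod_cons, Multiset.card_cons, add_comm, Multiset.map_cons, Multiset.sum_cons]
    exact pow_dvd_coeff_mul le_rfl (natDegree_multiset_prod_le t) hg
      (ih fun g hg => hs g (Multiset.mem_cons_of_mem hg)) j

end CommSemiring

theorem pow_dvd_hasseDeriv_eval [CommRing R] [IsDomain R] {a c : R} {f : R[X]}
    {s : Multiset R[X]} (hf : f = C c * s.prod) (hf0 : f ≠ 0)
    (hs : ∀ g ∈ s, a ∣ g.leadingCoeff) (x : R) {i : ℕ} (hi : i ≤ f.natDegree) :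
    a ^ (Multiset.card s - i) ∣ (hasseDeriv (f.natDegree - i) f).eval x := by
  have hc : c ≠ 0 := by rintro rfl; simp [hf] at hf0
  have hT : taylor x f = C c * (s.map (taylor x)).prod := by
    rw [hf, taylor_mul, taylor_C]
    exact congrArg _ (map_multiset_prod (taylorAlgHom x) s)
  have hdeg : ((s.map (taylor x)).map natDegree).sum = f.natDegree := by
    rw [hf, natDegree_C_mul hc, natDegree_multiset_prod, Multiset.map_map]
    · simp [natDegree_taylor]
    · rintro h0; simp [hf, Multiset.prod_eq_zero h0] at hf0
  have := pow_dvd_coeff_multiset_prod (s.map (taylor x))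
    (by simpa [leadingCoeff_taylor] using hs) (f.natDegree - i)
  rw [Multiset.card_map, hdeg, Nat.sub_sub_self hi] at this
  rw [← taylor_coeff, hT, coeff_C_mul]
  exact this.mul_left c

end Polynomial

theorem abs_coeff_le_height_mul (f : ℤ[X]) {i : ℕ} (hi : i < f.natDegree) :
    |(f.coeff i : ℝ)| ≤ height f * |(f.leadingCoeff : ℝ)| := by
  have hlc : (0 : ℝ) < |(f.leadingCoeff : ℝ)| := by
    simpa [leadingCoeff_eq_zero] using (ne_zero_of_natDegree_gt hi)
  rw [← div_le_iff₀ hlc]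
  calc |(f.coeff i : ℝ)| / |(f.leadingCoeff : ℝ)|
      = (|f.coeff (⟨i, hi⟩ : Fin f.natDegree)| : ℝ) / |f.coeff f.natDegree| := by push_cast; rfl
    _ ≤ height f :=
        le_ciSup (f := fun j : Fin f.natDegree => (|f.coeff j| : ℝ) / |f.coeff f.natDegree|)
          (Set.finite_range _).bddAbove ⟨i, hi⟩

theorem height_nonneg (f : ℤ[X]) : 0 ≤ height f :=
  Real.iSup_nonneg fun _ => by positivity

theorem cauchyBound_map_intCast_le (f : ℤ[X]) :
    (cauchyBound (f.map (Int.castRingHom ℂ)) : ℝ) ≤ height f + 1 := by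
  have hinj : Function.Injective (Int.castRingHom ℂ) := Int.cast_injective
  rcases eq_or_ne f 0 with rfl | hf
  · simpa using height_nonneg 0
  have hlc : 0 < ‖(f.leadingCoeff : ℂ)‖₊ := by simpa using hf
  suffices h : (Finset.range f.natDegree).sup (fun i => ‖(f.coeff i : ℂ)‖₊) ≤
      (height f).toNNReal * ‖(f.leadingCoeff : ℂ)‖₊ by
    rw [cauchyBound, natDegree_map_eq_of_injective hinj, leadingCoeff_map_of_injective hinj]
    simp only [coeff_map, eq_intCast, NNReal.coe_add, NNReal.coe_one, add_le_add_iff_right]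
    rw [← div_le_iff₀ hlc] at h
    rw [← Real.coe_toNNReal _ (height_nonneg f)]
    exact_mod_cast h
  refine Finset.sup_le fun i hi => ?_
  rw [← NNReal.coe_le_coe, NNReal.coe_mul, Real.coe_toNNReal _ (height_nonneg f), coe_nnnorm,
    coe_nnnorm, Complex.norm_intCast, Complex.norm_intCast]
  exact abs_coeff_le_height_mul f (Finset.mem_range.mp hi)

theorem Polynomial.norm_leadingCoeff_mul_pow_lt_norm_eval {K : Type*} [NormedField K]
    [IsAlgClosed K] {G : K[X]} (hG : 0 < G.natDegree) {x : K} {c : ℝ} (hc : 0 < c)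
    (hroots : ∀ ζ ∈ G.roots, c < ‖x - ζ‖) :
    ‖G.leadingCoeff‖ * c ^ G.natDegree < ‖G.eval x‖ := by
  have hsplit := IsAlgClosed.splits G
  have hlc : 0 < ‖G.leadingCoeff‖ := by
    simpa using ne_zero_of_natDegree_gt hG
  have hne : G.roots ≠ 0 := by
    rw [← Multiset.card_pos, ← hsplit.natDegree_eq_card_roots]; exact hG
  rw [hsplit.eval_eq_prod_roots, norm_mul, ← normHom_apply (_ : Multiset K).prod,
    map_multiset_prod, Multiset.map_map, hsplit.natDegree_eq_card_roots,
    ← Multiset.prod_replicate, ← Multiset.map_const']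
  gcongr
  exact Multiset.prod_map_lt_prod_map hne _ _ (fun _ _ => hc) hroots

theorem abs_leadingCoeff_mul_pow_lt_abs_eval {f g : ℤ[X]} (hf : f ≠ 0) (hgf : g ∣ f)
    (hg : 0 < g.natDegree) {x : ℤ} (hx : height f + 1 < |(x : ℝ)|) :
    |(g.leadingCoeff : ℝ)| * (|(x : ℝ)| - 1 - height f) ^ g.natDegree <
      |((g.eval x : ℤ) : ℝ)| := by
  have hinj : Function.Injective (Int.castRingHom ℂ) := Int.cast_injective
  set F := f.map (Int.castRingHom ℂ)
  set G := g.map (Int.castRingHom ℂ)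
  have hF : F ≠ 0 := (Polynomial.map_ne_zero_iff hinj).mpr hf
  have hroots : ∀ ζ ∈ G.roots, |(x : ℝ)| - 1 - height f < ‖(x : ℂ) - ζ‖ := by
    intro ζ hζ
    have hζF : F.IsRoot ζ :=
      (mem_roots hF).mp (Multiset.mem_of_le (roots.le_of_dvd hF (map_dvd _ hgf)) hζ)
    have hζb : ‖ζ‖ < height f + 1 := (NNReal.coe_lt_coe.mpr (hζF.norm_lt_cauchyBound hF)).trans_le
      (cauchyBound_map_intCast_le f)
    have := norm_sub_norm_le (x : ℂ) ζ
    rw [Complex.norm_intCast] at this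
    linarith
  have := norm_leadingCoeff_mul_pow_lt_norm_eval (G := G)
    (by rwa [natDegree_map_eq_of_injective hinj]) (by linarith) hroots
  simpa only [G, natDegree_map_eq_of_injective hinj, leadingCoeff_map_of_injective hinj,
    eval_intCast_map, eq_intCast, Complex.norm_intCast, Int.cast_id] using this

theorem Polynomial.IsPrimitive.exists_eq_C_mul_prod_irreducible {R : Type*} [CommRing R]
    [IsDomain R] [UniqueFactorizationMonoid R] {f : R[X]} (hf : f.IsPrimitive) :
    ∃ (u : Rˣ) (fs : Multiset R[X]),
      (∀ g ∈ fs, 0 < g.natDegree ∧ Irreducible g) ∧ f = C (u : R) * fs.prod := by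
  obtain ⟨fs, hirr, v, hv⟩ := WfDvdMonoid.exists_factors f hf.ne_zero
  obtain ⟨r, hr, hrv⟩ := Polynomial.isUnit_iff.mp v.isUnit
  have hfu : f = C (hr.unit : R) * fs.prod := by rw [← hv, IsUnit.unit_spec, hrv, mul_comm]
  refine ⟨hr.unit, fs, fun g hg =>
    ⟨Nat.pos_of_ne_zero fun h0 => (hirr g hg).not_isUnit ?_, hirr g hg⟩, hfu⟩
  rw [eq_C_of_natDegree_eq_zero h0, isUnit_C]
  exact hf _ (eq_C_of_natDegree_eq_zero h0 ▸ hfu ▸ (Multiset.dvd_prod hg).mul_left _)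

theorem Polynomial.irreducible_C_mul_prod_of_card_le_one {R : Type*} [CommRing R] {u : Rˣ}
    {fs : Multiset R[X]} (hirr : ∀ g ∈ fs, Irreducible g) (hcard : Multiset.card fs ≤ 1)
    (hdeg : 0 < (C (u : R) * fs.prod).natDegree) : Irreducible (C (u : R) * fs.prod) := by
  rw [irreducible_isUnit_mul (isUnit_C.mpr u.isUnit)]
  rcases Nat.le_one_iff_eq_zero_or_eq_one.mp hcard with h | h
  · simp [Multiset.card_eq_zero.mp h] at hdeg
  · obtain ⟨g, rfl⟩ := Multiset.card_eq_one.mp h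
    simpa using hirr g (Multiset.mem_singleton_self g)

theorem le_add_intVal_of_pow_dvd {p : ℕ} [Fact p.Prime] {a : ℤ} {r i : ℕ}
    (h : (p : ℤ) ^ (r - i) ∣ a) : (r : ℕ∞) ≤ i + intVal p a := by
  unfold intVal
  split_ifs with ha
  · simp
  · have := ((padicValInt_dvd_iff (r - i) a).mp h).resolve_left ha
    exact_mod_cast (by omega : r ≤ i + padicValInt p a)

theorem intVal_eq_zero_of_not_dvd {p : ℕ} {a : ℤ} (h : ¬ (p : ℤ) ∣ a) : intVal p a = 0 := by
  rw [intVal, if_neg (by rintro rfl; exact h (dvd_zero _)), padicValInt.eq_zero_of_not_dvd h]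
  rfl

theorem min_add_intVal_le_one {p k : ℕ} {a : ℤ} (h : k = 1 ∨ ¬ (p : ℤ) ∣ a) :
    min (k : ℕ∞) (1 + intVal p a) ≤ 1 := by
  rcases h with rfl | h
  · exact min_le_left _ _
  · simp [intVal_eq_zero_of_not_dvd h]

theorem natAbs_leadingCoeff_C_mul_prod (u : ℤˣ) (fs : Multiset ℤ[X]) :
    (C (u : ℤ) * fs.prod).leadingCoeff.natAbs = (fs.map fun g => g.leadingCoeff.natAbs).prod := by
  rw [leadingCoeff_mul, leadingCoeff_C, Int.natAbs_mul, Int.natAbs_of_isUnit u.isUnit, one_mul,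
    leadingCoeff_multiset_prod]
  exact (map_multiset_prod Int.natAbsHom _).trans (by rw [Multiset.map_map]; rfl)

theorem natAbs_eval_C_mul_prod (u : ℤˣ) (fs : Multiset ℤ[X]) (x : ℤ) :
    ((C (u : ℤ) * fs.prod).eval x).natAbs = (fs.map fun g => (g.eval x).natAbs).prod := by
  rw [eval_mul, eval_C, Int.natAbs_mul, Int.natAbs_of_isUnit u.isUnit, one_mul,
    eval_multiset_prod]
  exact (map_multiset_prod Int.natAbsHom _).trans (by rw [Multiset.map_map]; rfl)

theorem natAbs_leadingCoeff_mul_lt_natAbs_eval {f g : ℤ[X]} (hf : f ≠ 0) (hgf : g ∣ f)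
    {Δ d : ℕ} (hΔ0 : 0 < Δ) (hΔ : Δ ≤ g.natDegree) (hd : 0 < d) {x : ℤ}
    (hx : height f + 1 ≤ |(x : ℝ)|) (hxd : (d : ℝ) ≤ (|(x : ℝ)| - 1 - height f) ^ Δ) :
    g.leadingCoeff.natAbs * d < (g.eval x).natAbs := by
  set c := |(x : ℝ)| - 1 - height f
  have hc : 1 ≤ c := (one_le_pow_iff_of_nonneg (by linarith) hΔ0.ne').mp
    ((Nat.one_le_cast.mpr hd).trans hxd)
  have hdc : (d : ℝ) ≤ c ^ g.natDegree := hxd.trans (pow_le_pow_right₀ hc hΔ)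
  have hlt := abs_leadingCoeff_mul_pow_lt_abs_eval hf hgf (hΔ0.trans_le hΔ) (x := x)
    (by linarith)
  have : (g.leadingCoeff.natAbs * d : ℝ) < (g.eval x).natAbs := by
    push_cast [Nat.cast_natAbs]
    calc |(g.leadingCoeff : ℝ)| * d ≤ |(g.leadingCoeff : ℝ)| * c ^ g.natDegree := by gcongr
      _ < _ := hlt
  exact_mod_cast this

theorem card_le_and_prime_dvd_leadingCoeff {f : ℤ[X]} {u : ℤˣ} {fs : Multiset ℤ[X]}
    (hf : f = C (u : ℤ) * fs.prod) {Δ : ℕ} (hΔ0 : 0 < Δ)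
    (hΔ : ∀ g ∈ fs, Δ ≤ g.natDegree) {m d k p q : ℕ} (hd : 0 < d) (hp : p.Prime)
    (hpd : ¬ p ∣ d) (hq : 0 < q) (hcard : 2 ≤ Multiset.card fs)
    (hm1 : height f + 1 ≤ (m : ℝ))
    (hm2 : (d : ℝ) ≤ ((m : ℝ) - 1 - height f) ^ Δ)
    (hlc : f.leadingCoeff.natAbs = p ^ k * d)
    (hqmin : ∀ q', q'.Prime → q' ∣ (f.eval (m : ℤ)).natAbs → q ≤ q')
    (hfm : (f.eval (m : ℤ)).natAbs ≤ q * (p ^ k * d)) :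
    Multiset.card fs ≤ k ∧ ∀ g ∈ fs, (p : ℤ) ∣ g.leadingCoeff := by
  have hf0 : f ≠ 0 := fun h => by simp [h, hd.ne', hp.ne_zero] at hlc
  have hgf : ∀ g ∈ fs, g ∣ f := fun g hg => hf ▸ (Multiset.dvd_prod hg).mul_left _
  rw [hf, natAbs_leadingCoeff_C_mul_prod] at hlc
  rw [hf, natAbs_eval_C_mul_prod] at hqmin hfm
  have hBV : ∀ g ∈ fs, g.leadingCoeff.natAbs * d < (g.eval (m : ℤ)).natAbs := fun g hg =>
    natAbs_leadingCoeff_mul_lt_natAbs_eval hf0 (hgf g hg) hΔ0 (hΔ g hg) hd (by simpa using hm1)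
      (by simpa using hm2)
  have hB : ∀ g ∈ fs, 0 < g.leadingCoeff.natAbs := fun g hg =>
    Int.natAbs_pos.mpr (leadingCoeff_ne_zero.mpr (ne_zero_of_dvd_ne_zero hf0 (hgf g hg)))
  have hqV : ∀ g ∈ fs, q ≤ (g.eval (m : ℤ)).natAbs := by
    intro g hg
    have h1 : (g.eval (m : ℤ)).natAbs ≠ 1 := by nlinarith [hBV g hg, hB g hg]
    refine (hqmin _ (Nat.minFac_prime h1) ?_).trans
      (Nat.minFac_le ((Nat.zero_le _).trans_lt (hBV g hg)))
    exact (Nat.minFac_dvd _).trans (Multiset.dvd_prod (Multiset.mem_map_of_mem _ hg))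
  have hpB : ∀ g ∈ fs, p ∣ g.leadingCoeff.natAbs := fun g hg =>
    hp.dvd_of_dvd_pow_mul_of_lt (hlc ▸ Multiset.dvd_prod (Multiset.mem_map_of_mem _ hg)) hd
      ((Nat.le_self_pow (by omega) d).trans_lt
        (Multiset.pow_pred_card_lt_of_prod_map_le hq hd hB hBV hqV (hlc ▸ hfm) hcard hg))
  exact ⟨Multiset.card_le_of_prime_dvd_of_prod_map_eq hp hpd hpB hlc,
    fun g hg => Int.natCast_dvd.mpr (hpB g hg)⟩

theorem statement4_general
    (f : Polynomial ℤ) (n : ℕ) (hdeg : f.natDegree = n)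
    (hprim : f.IsPrimitive)
    (Δ : ℕ) (hΔ0 : 0 < Δ) (hΔn : Δ ≤ n)
    (hΔ : ∀ g : Polynomial ℤ, g ∣ f → 0 < g.natDegree → Δ ≤ g.natDegree)
    (m d k : ℕ) (hd : 0 < d) (hk : 0 < k)
    (p : ℕ) (hp : Nat.Prime p) (hpd : ¬ p ∣ d)
    (hm1 : height f + 1 ≤ (m : ℝ))
    (hm2 : (d : ℝ) ≤ ((m : ℝ) - 1 - height f) ^ Δ)
    (hsn : (f.coeff n).natAbs = p ^ k * d)
    (q : ℕ) (hq : Nat.Prime q)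
    (hqmin : ∀ q', Nat.Prime q' → q' ∣ (f.eval (m : ℤ)).natAbs → q ≤ q')
    (hq0 : ((f.eval (m : ℤ)).natAbs : ℚ) / (q : ℚ) ≤ ((f.coeff n).natAbs : ℚ)) :
    (∃ (u : ℤˣ) (gs : Multiset (Polynomial ℤ)),
      (Multiset.card gs : ℕ∞) ≤
        (Finset.Icc 1 n).inf
          (fun i => min (k : ℕ∞)
            ((i : ℕ∞) + intVal p ((Polynomial.hasseDeriv (n - i) f).eval (m : ℤ)))) ∧
      (∀ g ∈ gs, 0 < g.natDegree ∧ Irreducible g) ∧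
      f = Polynomial.C (u : ℤ) * gs.prod) ∧
    ((k = 1 ∨ ¬ ((p : ℤ) ∣ (Polynomial.hasseDeriv (n - 1) f).eval (m : ℤ))) →
      Irreducible f) := by
  subst hdeg
  have := Fact.mk hp
  obtain ⟨u, fs, hfs, hf⟩ := hprim.exists_eq_C_mul_prod_irreducible
  have hfm : (f.eval (m : ℤ)).natAbs ≤ q * (p ^ k * d) := by
    rw [div_le_iff₀ (by exact_mod_cast hq.pos), hsn] at hq0
    exact_mod_cast hq0.trans_eq (mul_comm _ _)
  have key : Multiset.card fs ≤ k ∧ ∀ i ∈ Finset.Icc 1 f.natDegree,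
      (p : ℤ) ^ (Multiset.card fs - i) ∣ (hasseDeriv (f.natDegree - i) f).eval (m : ℤ) := by
    rcases le_or_gt (Multiset.card fs) 1 with h1 | h2
    · refine ⟨h1.trans hk, fun i hi => ?_⟩
      rw [Nat.sub_eq_zero_of_le (h1.trans (Finset.mem_Icc.mp hi).1), pow_zero]
      exact one_dvd _
    · have hΔfs : ∀ g ∈ fs, Δ ≤ g.natDegree := fun g hg =>
        hΔ g (hf ▸ (Multiset.dvd_prod hg).mul_left _) (hfs g hg).1
      obtain ⟨hrk, hpfs⟩ := card_le_and_prime_dvd_leadingCoeff hf hΔ0 hΔfs hd hp hpd hq.pos h2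
        hm1 hm2 hsn hqmin hfm
      exact ⟨hrk, fun i hi =>
        pow_dvd_hasseDeriv_eval hf hprim.ne_zero hpfs _ (Finset.mem_Icc.mp hi).2⟩
  have hcard : (Multiset.card fs : ℕ∞) ≤ (Finset.Icc 1 f.natDegree).inf fun i =>
      min (k : ℕ∞) (i + intVal p ((hasseDeriv (f.natDegree - i) f).eval (m : ℤ))) :=
    Finset.le_inf fun i hi =>
      le_min (by exact_mod_cast key.1) (le_add_intVal_of_pow_dvd (key.2 i hi))
  refine ⟨⟨u, fs, hcard, hfs, hf⟩, fun h => ?_⟩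
  have hn : 0 < f.natDegree := hΔ0.trans_le hΔn
  have h1 : (Multiset.card fs : ℕ∞) ≤ 1 :=
    hcard.trans ((Finset.inf_le (Finset.mem_Icc.mpr ⟨le_rfl, hn⟩)).trans (min_add_intVal_le_one h))
  rw [hf] at hn ⊢
  exact irreducible_C_mul_prod_of_card_le_one (fun g hg => (hfs g hg).2) (by exact_mod_cast h1) hn

/-- Theorem 5: let `f` be primitive of degree `n` with `a_0 a_n ≠ 0`, and let
`Δ ≤ n` be a positive integer such that `f` has no nonconstant factor of degree
less than `Δ` in `ℤ[z]`. If there are positive integers `m, d, k` and a prime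
`p ∤ d` with `m ≥ h_f + 1`, `(m - 1 - h_f)^Δ ≥ d`, `|s_n(m)| = |a_n| = p^k d` and
`|s_0(m)|/q ≤ |s_n(m)|` where `q` is the smallest prime divisor of
`|s_0(m)| = |f(m)|`, then `f` is a product of at most
`min_{1 ≤ i ≤ n} {k, i + v_p(s_{n-i}(m))}` irreducible polynomials in `ℤ[z]`
(with `s_i = f^{(i)}/i!` and `v_p(0) = ∞`); in particular, if `k = 1` or
`p ∤ s_{n-1}(m)`, then `f` is irreducible. -/
theorem statement4
    (f : Polynomial ℤ) (n : ℕ) (hdeg : f.natDegree = n)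
    (ha : f.coeff 0 * f.coeff n ≠ 0) (hprim : f.IsPrimitive)
    (Δ : ℕ) (hΔ0 : 0 < Δ) (hΔn : Δ ≤ n)
    (hΔ : ∀ g : Polynomial ℤ, g ∣ f → 0 < g.natDegree → Δ ≤ g.natDegree)
    (m d k : ℕ) (hm : 0 < m) (hd : 0 < d) (hk : 0 < k)
    (p : ℕ) (hp : Nat.Prime p) (hpd : ¬ p ∣ d)
    (hm1 : height f + 1 ≤ (m : ℝ))
    (hm2 : (d : ℝ) ≤ ((m : ℝ) - 1 - height f) ^ Δ)
    (hsn : (f.coeff n).natAbs = p ^ k * d)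
    (q : ℕ) (hq : Nat.Prime q) (hqdvd : q ∣ (f.eval (m : ℤ)).natAbs)
    (hqmin : ∀ q', Nat.Prime q' → q' ∣ (f.eval (m : ℤ)).natAbs → q ≤ q')
    (hq0 : ((f.eval (m : ℤ)).natAbs : ℚ) / (q : ℚ) ≤ ((f.coeff n).natAbs : ℚ)) :
    (∃ (u : ℤˣ) (gs : Multiset (Polynomial ℤ)),
      (Multiset.card gs : ℕ∞) ≤
        (Finset.Icc 1 n).inf
          (fun i => min (k : ℕ∞)
            ((i : ℕ∞) + intVal p ((Polynomial.hasseDeriv (n - i) f).eval (m : ℤ)))) ∧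
      (∀ g ∈ gs, 0 < g.natDegree ∧ Irreducible g) ∧
      f = Polynomial.C (u : ℤ) * gs.prod) ∧
    ((k = 1 ∨ ¬ ((p : ℤ) ∣ (Polynomial.hasseDeriv (n - 1) f).eval (m : ℤ))) →
      Irreducible f) :=
  statement4_general f n hdeg hprim Δ hΔ0 hΔn hΔ m d k hd hk p hp hpd hm1 hm2 hsn q hq hqmin hq0
end
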